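/- Let F be a nonarchimedean local field whose residue field has characteristic different from 2, ψ an unramified additive character of F, m ≥ 1 an integer, and ω : {1,−1} → ℂ^× a homomorphism. Let W : SL₂(F) → ℂ satisfy: (i) W(n(b)·g) = ψ(b)·W(g) for all b ∈ F; (ii) W(g·n(b)) = ψ(b)·W(g) for all b ∈ 𝔪^{-m}; (iii) W(g·t(a')) = W(g) for all a' ∈ 1 + 𝔪^m; (iv) W((−1)·g) = ω(−1)·W(g) for all g, where −1 denotes the central element −I₂; (v) W(I₂) = 1. Then for every a ∈ F^×: if a = z·a' for some z ∈ {1,−1} and a' ∈ 1 + 𝔪^m then W(t(a)) = ω(z), and otherwise W(t(a)) = 0. (Corollary 3.4 of the paper, stated for any function with the equivariance properties of a Howe-vector Whittaker function.) -/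

import Mathlib

/-!
We model a nonarchimedean local field as a field `F` complete with respect to a
nontrivial discrete valuation `Valued.v : F → ℤₘ₀` (the hypothesis
`Function.Surjective (Valued.v : F → ℤₘ₀)` says the valuation is discrete and
nontrivial, with value group exactly `ℤ`), with finite residue field
(`FiniteResidueField F` below says `𝒪/𝔪` is finite).
For `m : ℤ`, `mpow F m` is the fractional ideal `𝔪^m = {x : v(x) ≥ m}` (written
multiplicatively: `v x ≤ ofAdd (-m)`), and `oneAddMpow F m` is the set `1 + 𝔪^m`.
-/

open scoped Multiplicative
open MatrixGroups MeasureTheory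

noncomputable section

/-- The fractional ideal `𝔪^m = {x ∈ F : v(x) ≥ m}`. -/
def mpow (F : Type*) [Field F] [Valued F (WithZero (Multiplicative ℤ))] (m : ℤ) : Set F :=
  {x : F | Valued.v x ≤ ((Multiplicative.ofAdd (-m) : Multiplicative ℤ) : (WithZero (Multiplicative ℤ)))}

/-- The set `1 + 𝔪^m`. -/
def oneAddMpow (F : Type*) [Field F] [Valued F (WithZero (Multiplicative ℤ))] (m : ℤ) : Set F :=
  {x : F | x - 1 ∈ mpow F m}

/-- An additive character `ψ` of `F` is unramified if it is trivial on the ring of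
integers `𝒪 = 𝔪^0` but nontrivial on `𝔪^{-1}`. -/
def IsUnramified (F : Type*) [Field F] [Valued F (WithZero (Multiplicative ℤ))] (ψ : AddChar F ℂ) : Prop :=
  (∀ x ∈ mpow F 0, ψ x = 1) ∧ ∃ x ∈ mpow F (-1), ψ x ≠ 1

/-- The residue field `𝒪/𝔪` is finite: finitely many elements of `𝒪` cover `𝒪`
modulo `𝔪`. -/
def FiniteResidueField (F : Type*) [Field F] [Valued F (WithZero (Multiplicative ℤ))] : Prop :=
  ∃ S : Finset F, ∀ x ∈ mpow F 0, ∃ y ∈ S, x - y ∈ mpow F 1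

/-- The residue field of `F` has characteristic different from `2`, i.e. `2` is a
unit of the ring of integers, i.e. `2 ∉ 𝔪`. -/
def ResidueCharNeTwo (F : Type*) [Field F] [Valued F (WithZero (Multiplicative ℤ))] : Prop :=
  (2 : F) ∉ mpow F 1

/-- `n(b) = [[1,b],[0,1]] ∈ SL₂(F)`. -/
def nMat (F : Type*) [Field F] (b : F) : SL(2,F) :=
  ⟨!![1, b; 0, 1], by simp [Matrix.det_fin_two_of]⟩

/-- `n̄(x) = [[1,0],[x,1]] ∈ SL₂(F)`. -/
def nbarMat (F : Type*) [Field F] (x : F) : SL(2,F) :=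
  ⟨!![1, 0; x, 1], by simp [Matrix.det_fin_two_of]⟩

/-- `t(a) = [[a,0],[0,a⁻¹]] ∈ SL₂(F)` for `a ∈ F^×`. -/
def tMat (F : Type*) [Field F] (a : Fˣ) : SL(2,F) :=
  ⟨!![(a : F), 0; 0, ((a⁻¹ : Fˣ) : F)], by simp [Matrix.det_fin_two_of]⟩

/-- `w = [[0,1],[-1,0]] ∈ SL₂(F)`. -/
def wMat (F : Type*) [Field F] : SL(2,F) :=
  ⟨!![0, 1; -1, 0], by simp [Matrix.det_fin_two_of]⟩

/-! If `W(t(a)) ≠ 0`, comparing (i) and (ii) through `t(a) n(b) = n(a²b) t(a)` gives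
`ψ((a² - 1) b) = 1` for every `b ∈ 𝔪^{-m}`, and since `ψ` is nontrivial on `𝔪^{-1}` this forces
`a² ∈ 1 + 𝔪^m`. As `2 = (a + 1) - (a - 1)` is a unit, `a - 1` and `a + 1` are not both in `𝔪`, so
one of them has valuation `≤ 0` and the other one valuation `≥ v(a² - 1)`: `±a ∈ 1 + 𝔪^m`.
On `±(1 + 𝔪^m)` the value of `W ∘ t` is read off from (iii), (iv) and (v). -/

open WithZero

theorem mem_mpow_iff {F : Type*} [Field F] [Valued F ℤᵐ⁰] {m : ℤ} {x : F} :
    x ∈ mpow F m ↔ Valued.v x ≤ exp (-m) :=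
  Iff.rfl

theorem notMem_mpow_iff {F : Type*} [Field F] [Valued F ℤᵐ⁰] {m : ℤ} {x : F} :
    x ∉ mpow F m ↔ exp (1 - m) ≤ Valued.v x := by
  rw [mem_mpow_iff, ← lt_mul_exp_iff_le exp_ne_zero, not_lt, ← exp_add, neg_add_eq_sub]

theorem one_le_valued_two {F : Type*} [Field F] [Valued F ℤᵐ⁰] (hchar : ResidueCharNeTwo F) :
    1 ≤ Valued.v (2 : F) := by
  simpa using notMem_mpow_iff.mp hchar

theorem Valuation.map_sub_one_le_or_map_add_one_le {R Γ₀ : Type*} [CommRing R]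
    [LinearOrderedCommMonoidWithZero Γ₀] (v : Valuation R Γ₀) (h2 : 1 ≤ v 2) (a : R) :
    v (a - 1) ≤ v (a ^ 2 - 1) ∨ v (a + 1) ≤ v (a ^ 2 - 1) := by
  have hfactor : v (a ^ 2 - 1) = v (a - 1) * v (a + 1) := by
    rw [← v.map_mul]; ring_nf
  have hmax : 1 ≤ max (v (a + 1)) (v (a - 1)) := by
    calc 1 ≤ v 2 := h2
      _ = v ((a + 1) - (a - 1)) := by ring_nf
      _ ≤ _ := v.map_sub _ _
  rw [hfactor]
  rcases le_max_iff.mp hmax with h | h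
  · exact Or.inl (le_mul_of_one_le_right' h)
  · exact Or.inr (le_mul_of_one_le_left' h)

theorem mem_oneAddMpow_or_neg_mem_of_sq_mem {F : Type*} [Field F] [Valued F ℤᵐ⁰]
    (hchar : ResidueCharNeTwo F) {m : ℤ} {a : F} (ha : a ^ 2 ∈ oneAddMpow F m) :
    a ∈ oneAddMpow F m ∨ -a ∈ oneAddMpow F m := by
  simp only [oneAddMpow, Set.mem_ofPred_eq, mem_mpow_iff] at ha ⊢
  rw [show -a - 1 = -(a + 1) by ring, Valuation.map_neg]
  rcases Valued.v.map_sub_one_le_or_map_add_one_le (one_le_valued_two hchar) a with h | h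
  · exact Or.inl (h.trans ha)
  · exact Or.inr (h.trans ha)

theorem mem_mpow_of_forall_addChar_mul_eq_one {F M : Type*} [Field F] [Valued F ℤᵐ⁰] [Monoid M]
    {ψ : AddChar F M} (hψ : ∃ x ∈ mpow F (-1), ψ x ≠ 1) {m : ℤ} {c : F}
    (h : ∀ b ∈ mpow F (-m), ψ (c * b) = 1) : c ∈ mpow F m := by
  obtain ⟨x, hx, hψx⟩ := hψ
  by_contra hc
  have hc0 : c ≠ 0 := by rintro rfl; simp [mpow] at hc
  have hcx : c⁻¹ * x ∈ mpow F (-m) := by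
    rw [mem_mpow_iff] at hx ⊢
    rw [Valued.v.map_mul, map_inv₀]
    calc (Valued.v c)⁻¹ * Valued.v x ≤ (exp (1 - m))⁻¹ * exp 1 := by
          gcongr
          · exact exp_pos
          · exact notMem_mpow_iff.mp hc
          · simpa using hx
      _ = exp (-(-m)) := by rw [← exp_neg, ← exp_add]; ring_nf
  exact hψx (by simpa [mul_inv_cancel_left₀ hc0] using h _ hcx)

theorem tMat_mul (F : Type*) [Field F] (a b : Fˣ) : tMat F a * tMat F b = tMat F (a * b) := by
  ext i j
  rw [Matrix.SpecialLinearGroup.coe_mul]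
  fin_cases i <;> fin_cases j <;> simp [tMat, Matrix.mul_apply, mul_comm]

theorem tMat_mul_nMat (F : Type*) [Field F] (a : Fˣ) (b : F) :
    tMat F a * nMat F b = nMat F ((a : F) ^ 2 * b) * tMat F a := by
  ext i j
  rw [Matrix.SpecialLinearGroup.coe_mul, Matrix.SpecialLinearGroup.coe_mul]
  fin_cases i <;> fin_cases j <;> simp [tMat, nMat, Matrix.mul_apply, sq, mul_assoc]
  field_simp

theorem addChar_sq_sub_one_mul_eq_one {F : Type*} [Field F] [Valued F ℤᵐ⁰] {ψ : AddChar F ℂ}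
    {m : ℤ} {W : SL(2,F) → ℂ}
    (hW1 : ∀ (b : F) (g : SL(2,F)), W (nMat F b * g) = ψ b * W g)
    (hW2 : ∀ b ∈ mpow F (-m), ∀ g : SL(2,F), W (g * nMat F b) = ψ b * W g)
    {a : Fˣ} (ha : W (tMat F a) ≠ 0) {b : F} (hb : b ∈ mpow F (-m)) :
    ψ (((a : F) ^ 2 - 1) * b) = 1 := by
  have h := hW2 b hb (tMat F a)
  rw [tMat_mul_nMat, hW1] at h
  rw [sub_mul, one_mul, AddChar.map_sub_eq_div, mul_right_cancel₀ ha h,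
    div_self (ψ.val_isUnit b).ne_zero]

theorem howe_vector_value_on_torus_general
    (F : Type*) [Field F] [Valued F (WithZero (Multiplicative ℤ))]
    (hchar : ResidueCharNeTwo F)
    (ψ : AddChar F ℂ) (hψ : IsUnramified F ψ)
    (m : ℤ)
    (ωneg : ℂ)
    (W : SL(2,F) → ℂ)
    (hW1 : ∀ (b : F) (g : SL(2,F)), W (nMat F b * g) = ψ b * W g)
    (hW2 : ∀ b ∈ mpow F (-m), ∀ g : SL(2,F), W (g * nMat F b) = ψ b * W g)
    (hW3 : ∀ a' : Fˣ, (a' : F) ∈ oneAddMpow F m → ∀ g : SL(2,F), W (g * tMat F a') = W g)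
    (hW4 : ∀ g : SL(2,F), W (tMat F (-1) * g) = ωneg * W g)
    (hW5 : W 1 = 1) :
    ∀ a : Fˣ,
      (∀ a' ∈ oneAddMpow F m, (a : F) = a' → W (tMat F a) = 1) ∧
      (∀ a' ∈ oneAddMpow F m, (a : F) = -a' → W (tMat F a) = ωneg) ∧
      ((∀ a' ∈ oneAddMpow F m, (a : F) ≠ a' ∧ (a : F) ≠ -a') → W (tMat F a) = 0) := by
  have h_one (u : Fˣ) (hu : (u : F) ∈ oneAddMpow F m) : W (tMat F u) = 1 := by
    simpa [hW5] using hW3 u hu 1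
  intro a
  refine ⟨fun a' ha' h ↦ h_one a (h ▸ ha'), fun a' ha' h ↦ ?_, fun hne ↦ ?_⟩
  · have hneg : ((-a : Fˣ) : F) ∈ oneAddMpow F m := by rwa [Units.val_neg, h, neg_neg]
    calc W (tMat F a) = W (tMat F (-1) * tMat F (-a)) := by rw [tMat_mul, neg_one_mul, neg_neg]
      _ = ωneg := by rw [hW4, h_one _ hneg, mul_one]
  · by_contra h0
    have hsq : (a : F) ^ 2 ∈ oneAddMpow F m :=
      mem_mpow_of_forall_addChar_mul_eq_one hψ.2 fun b hb ↦
        addChar_sq_sub_one_mul_eq_one hW1 hW2 h0 hb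
    rcases mem_oneAddMpow_or_neg_mem_of_sq_mem hchar hsq with h | h
    · exact (hne a h).1 rfl
    · exact (hne (-a) h).2 (neg_neg _).symm

/-- Corollary 3.4. Suppose the residue characteristic of `F` is not
`2`, `ψ` is unramified, `m ≥ 1`, and `ω : {1,-1} → ℂ^×` is a homomorphism (encoded by
the value `ωneg = ω(-1) ∈ ℂ` with `ωneg² = 1 = ω(1)`). Let `W : SL₂(F) → ℂ` satisfy
the equivariance properties (i)–(v) of a Howe-vector Whittaker function.  Then for
`a ∈ F^×`: if `a = z·a'` with `z ∈ {1,-1}` and `a' ∈ 1 + 𝔪^m` then `W(t(a)) = ω(z)`,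
and otherwise `W(t(a)) = 0`. -/
theorem howe_vector_value_on_torus
    (F : Type*) [Field F] [Valued F (WithZero (Multiplicative ℤ))] [CompleteSpace F]
    (hdisc : Function.Surjective (Valued.v : F → (WithZero (Multiplicative ℤ))))
    (hfin : FiniteResidueField F) (hchar : ResidueCharNeTwo F)
    (ψ : AddChar F ℂ) (hψcont : Continuous ψ) (hψ : IsUnramified F ψ)
    (m : ℤ) (hm : 1 ≤ m)
    (ωneg : ℂ) (hω : ωneg ^ 2 = 1)
    (W : SL(2,F) → ℂ)
    (hW1 : ∀ (b : F) (g : SL(2,F)), W (nMat F b * g) = ψ b * W g)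
    (hW2 : ∀ b ∈ mpow F (-m), ∀ g : SL(2,F), W (g * nMat F b) = ψ b * W g)
    (hW3 : ∀ a' : Fˣ, (a' : F) ∈ oneAddMpow F m → ∀ g : SL(2,F), W (g * tMat F a') = W g)
    (hW4 : ∀ g : SL(2,F), W (tMat F (-1) * g) = ωneg * W g)
    (hW5 : W 1 = 1) :
    ∀ a : Fˣ,
      (∀ a' ∈ oneAddMpow F m, (a : F) = a' → W (tMat F a) = 1) ∧
      (∀ a' ∈ oneAddMpow F m, (a : F) = -a' → W (tMat F a) = ωneg) ∧
      ((∀ a' ∈ oneAddMpow F m, (a : F) ≠ a' ∧ (a : F) ≠ -a') → W (tMat F a) = 0) :=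
  howe_vector_value_on_torus_general F hchar ψ hψ m ωneg W hW1 hW2 hW3 hW4 hW5
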